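/- Let 0 < ε < 1 and 0 < α < 1. Let G be a bipartite graph between nonempty finite vertex sets X and Y. Let k be a positive integer, let S₁,…,S_k ⊆ X, T₁,…,T_k ⊆ Y and c₁,…,c_k ∈ ℝ, and let G' be the edge-weighted bipartite graph on X ∪ Y with weight G'(x,y) = d_G(X,Y) + Σ_{i : x∈S_i, y∈T_i} c_i on each pair (x,y) ∈ X×Y. Suppose d_□(G, G') ≤ α·ε³/4. If U ⊆ X and W ⊆ Y satisfy |U| ≥ ε|X|, |W| ≥ ε|Y| and |d_G(U,W) − d_G(X,Y)| > ε, then |Σ_{i=1}^k c_i·|U ∩ S_i|·|W ∩ T_i|| ≥ (1 − α/4)·ε·|U|·|W|. -/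
import Mathlib


open Finset

set_option linter.unusedSectionVars false
set_option maxHeartbeats 1000000

variable {V : Type*} [DecidableEq V]

/-- Number of edges (pairs `(x,y) ∈ U × W` with `x ~ y`) of the bipartite graph `g`. -/
def eBip (g : V → V → Prop) [DecidableRel g] (U W : Finset V) : ℕ :=
  ((U ×ˢ W).filter fun p => g p.1 p.2).card

/-- Edge density of the bipartite graph `g` between `U` and `W`. -/
noncomputable def dBip (g : V → V → Prop) [DecidableRel g] (U W : Finset V) : ℝ :=
  (eBip g U W : ℝ) / ((U.card : ℝ) * (W.card : ℝ))

/-- Sum of the weights of a weighted bipartite graph over the pairs in `U × W`. -/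
def eWeight (G' : V → V → ℝ) (U W : Finset V) : ℝ :=
  ∑ x ∈ U, ∑ y ∈ W, G' x y

/-- Bipartite cut distance between the graph `g` (as a 0/1-weighted graph) and the weighted
bipartite graph `G'`: `max_{U ⊆ X, W ⊆ Y} |e_g(U,W) - e_{G'}(U,W)| / (|X||Y|)`. -/
noncomputable def cutDistBip (g : V → V → Prop) [DecidableRel g] (G' : V → V → ℝ)
    (X Y : Finset V) : ℝ :=
  (X.powerset ×ˢ Y.powerset).sup'
    (X.powerset_nonempty.product Y.powerset_nonempty)
    fun p => |(eBip g p.1 p.2 : ℝ) - eWeight G' p.1 p.2| / ((X.card : ℝ) * (Y.card : ℝ))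

lemma cutDist_spec (g : V → V → Prop) [DecidableRel g] (G' : V → V → ℝ)
    (X Y U W : Finset V) (hU : U ⊆ X) (hW : W ⊆ Y) :
    |(eBip g U W : ℝ) - eWeight G' U W| / ((X.card : ℝ) * (Y.card : ℝ)) ≤
      cutDistBip g G' X Y := by
  have hmem : (U, W) ∈ X.powerset ×ˢ Y.powerset := by
    simp [Finset.mem_product, Finset.mem_powerset, hU, hW]
  exact Finset.le_sup'
    (f := fun p : Finset V × Finset V =>
      |(eBip g p.1 p.2 : ℝ) - eWeight G' p.1 p.2| / ((X.card : ℝ) * (Y.card : ℝ))) hmem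

lemma eWeight_decomp (g : V → V → Prop) [DecidableRel g] (X Y : Finset V)
    (k : ℕ) (S T : Fin k → Finset V) (c : Fin k → ℝ) (U W : Finset V) :
    eWeight (fun x y => dBip g X Y + ∑ i : Fin k, if x ∈ S i ∧ y ∈ T i then c i else 0) U W =
      dBip g X Y * ((U.card : ℝ) * W.card) +
      ∑ i : Fin k, c i * ((U ∩ S i).card : ℝ) * ((W ∩ T i).card : ℝ) := by
  have key : ∀ i : Fin k, (∑ x ∈ U, ∑ y ∈ W, if x ∈ S i ∧ y ∈ T i then c i else 0)
      = c i * ((U ∩ S i).card : ℝ) * ((W ∩ T i).card : ℝ) := by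
    intro i
    have hx : ∀ x ∈ U, (∑ y ∈ W, if x ∈ S i ∧ y ∈ T i then c i else 0)
        = if x ∈ S i then ((W ∩ T i).card : ℝ) * c i else 0 := by
      intro x _
      by_cases hxS : x ∈ S i <;>
        simp [hxS, Finset.sum_ite_mem, Finset.sum_const, nsmul_eq_mul]
    rw [Finset.sum_congr rfl hx, Finset.sum_ite_mem, Finset.sum_const, nsmul_eq_mul]
    ring
  have swap : (∑ x ∈ U, ∑ y ∈ W, ∑ i : Fin k, if x ∈ S i ∧ y ∈ T i then c i else 0)
      = ∑ i : Fin k, ∑ x ∈ U, ∑ y ∈ W, if x ∈ S i ∧ y ∈ T i then c i else 0 := by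
    rw [Finset.sum_congr rfl fun x _ => Finset.sum_comm (s := W)
      (t := (Finset.univ : Finset (Fin k)))
      (f := fun y i => if x ∈ S i ∧ y ∈ T i then c i else 0)]
    exact Finset.sum_comm
  simp only [eWeight, Finset.sum_add_distrib, Finset.sum_const, nsmul_eq_mul]
  rw [swap, Finset.sum_congr rfl fun i _ => key i]
  ring

/-- If `G'` is a Frieze–Kannan type approximation of the bipartite graph `g` with
`d_□(g, G') ≤ αε³/4`, then any witness `(U, W)` of `ε`-irregularity satisfies
`|∑ᵢ cᵢ |U ∩ Sᵢ| |W ∩ Tᵢ|| ≥ (1 - α/4) ε |U| |W|`. -/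
theorem irregularity_witness_from_decomposition (ε α : ℝ)
    (hε0 : 0 < ε) (hε1 : ε < 1) (hα0 : 0 < α) (hα1 : α < 1)
    (X Y : Finset V) (hX : X.Nonempty) (hY : Y.Nonempty)
    (g : V → V → Prop) [DecidableRel g]
    (k : ℕ) (hk : 0 < k) (S T : Fin k → Finset V)
    (hS : ∀ i, S i ⊆ X) (hT : ∀ i, T i ⊆ Y) (c : Fin k → ℝ)
    (hcut : cutDistBip g
      (fun x y => dBip g X Y + ∑ i : Fin k, if x ∈ S i ∧ y ∈ T i then c i else 0) X Y ≤
      α * ε ^ 3 / 4)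
    (U W : Finset V) (hU : U ⊆ X) (hW : W ⊆ Y)
    (hUcard : ε * (X.card : ℝ) ≤ (U.card : ℝ)) (hWcard : ε * (Y.card : ℝ) ≤ (W.card : ℝ))
    (hirr : ε < |dBip g U W - dBip g X Y|) :
    (1 - α / 4) * ε * (U.card : ℝ) * (W.card : ℝ) ≤
      |∑ i : Fin k, c i * ((U ∩ S i).card : ℝ) * ((W ∩ T i).card : ℝ)| := by
  have hXc : (0:ℝ) < X.card := by exact_mod_cast Finset.card_pos.2 hX
  have hYc : (0:ℝ) < Y.card := by exact_mod_cast Finset.card_pos.2 hY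
  have hUc : (0:ℝ) < U.card := lt_of_lt_of_le (by positivity) hUcard
  have hWc : (0:ℝ) < W.card := lt_of_lt_of_le (by positivity) hWcard
  have h1 := (cutDist_spec g _ X Y U W hU hW).trans hcut
  rw [div_le_iff₀ (by positivity)] at h1
  rw [eWeight_decomp] at h1
  have he : (eBip g U W : ℝ) = dBip g U W * ((U.card : ℝ) * W.card) := by
    rw [dBip, div_mul_cancel₀]
    positivity
  rw [he] at h1
  set Ssum := ∑ i : Fin k, c i * ((U ∩ S i).card : ℝ) * ((W ∩ T i).card : ℝ) with hSsum
  have h2 : |dBip g U W - dBip g X Y| * ((U.card : ℝ) * W.card) - |Ssum|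
      ≤ α * ε ^ 3 / 4 * ((X.card : ℝ) * Y.card) := by
    calc |dBip g U W - dBip g X Y| * ((U.card : ℝ) * W.card) - |Ssum|
        = |(dBip g U W - dBip g X Y) * ((U.card : ℝ) * W.card)| - |Ssum| := by
          rw [abs_mul, abs_of_pos (by positivity : (0:ℝ) < (U.card : ℝ) * W.card)]
      _ ≤ |(dBip g U W - dBip g X Y) * ((U.card : ℝ) * W.card) - Ssum| := abs_sub_abs_le_abs_sub _ _
      _ = |dBip g U W * ((U.card : ℝ) * W.card) -
            (dBip g X Y * ((U.card : ℝ) * W.card) + Ssum)| := by ring_nf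
      _ ≤ α * ε ^ 3 / 4 * ((X.card : ℝ) * Y.card) := h1
  have h3 : ε ^ 2 * ((X.card : ℝ) * Y.card) ≤ (U.card : ℝ) * W.card := by
    have := mul_le_mul hUcard hWcard (by positivity) (le_of_lt hUc)
    nlinarith
  have h4 : α * ε ^ 3 / 4 * ((X.card : ℝ) * Y.card) ≤ α * ε / 4 * ((U.card : ℝ) * W.card) := by
    have h5 := mul_le_mul_of_nonneg_left h3 (show (0:ℝ) ≤ α * ε / 4 by positivity)
    nlinarith [h5]
  nlinarith [h2, h4, hirr, mul_pos hUc hWc,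
    mul_lt_mul_of_pos_right hirr (mul_pos hUc hWc)]
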